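/- arXiv:1910.05002 — 4 statements merged into one kernel-verified Lean document; each statement's English description precedes it below -/
import Mathlib

section
/- Let X be a metric space and A, B be nonempty closed subsets of X with A ∩ B = ∅. Then the function x ↦ dist(x, A) / min(1, dist(x, B)), defined on X ∖ B, is a 𝒦₀^∞ function of A on X ∖ B: it is continuous and nonnegative on X ∖ B, vanishes exactly on A, and all its sublevel sets are closed in X. -/
/-- Let `A`, `B` be nonempty closed subsets of a metric space `X` with
`A ∩ B = ∅`.  Then `x ↦ dist(x,A) / min(1, dist(x,B))`, defined on `X \ B`, is a `𝒦₀^∞`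
function of `A` on `X \ B`: continuous and nonnegative on `X \ B`, vanishing exactly on
`A`, and with all sublevel sets closed in `X`. -/
theorem dist_quotient_is_K0_infty {X : Type*} [MetricSpace X] (A B : Set X)
    (hAne : A.Nonempty) (hBne : B.Nonempty) (hAcl : IsClosed A) (hBcl : IsClosed B)
    (hdisj : A ∩ B = ∅) :
    ContinuousOn (fun x : X => Metric.infDist x A / min 1 (Metric.infDist x B)) Bᶜ ∧
    (∀ x ∈ Bᶜ, 0 ≤ Metric.infDist x A / min 1 (Metric.infDist x B)) ∧
    (∀ x ∈ Bᶜ, Metric.infDist x A / min 1 (Metric.infDist x B) = 0 ↔ x ∈ A) ∧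
    (∀ a : ℝ, 0 ≤ a →
      IsClosed {x : X | x ∈ Bᶜ ∧ Metric.infDist x A / min 1 (Metric.infDist x B) ≤ a}) := by
  have hden : ∀ x ∈ Bᶜ, 0 < min 1 (Metric.infDist x B) := by
    intro x hx
    have : 0 < Metric.infDist x B := (hBcl.notMem_iff_infDist_pos hBne).1 hx
    exact lt_min one_pos this
  refine ⟨?_, ?_, ?_, ?_⟩
  · apply ContinuousOn.div
    · exact (Metric.continuous_infDist_pt A).continuousOn
    · exact (continuous_const.min (Metric.continuous_infDist_pt B)).continuousOn
    · exact fun x hx => (hden x hx).ne'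
  · intro x hx
    exact div_nonneg (Metric.infDist_nonneg) (hden x hx).le
  · intro x hx
    rw [div_eq_zero_iff]
    constructor
    · rintro (h | h)
      · exact (hAcl.mem_iff_infDist_zero hAne).2 h
      · exact absurd h (hden x hx).ne'
    · intro h
      left
      exact (hAcl.mem_iff_infDist_zero hAne).1 h
  · intro a ha
    have hEq : {x : X | x ∈ Bᶜ ∧ Metric.infDist x A / min 1 (Metric.infDist x B) ≤ a}
        = {x : X | Metric.infDist x A - a * min 1 (Metric.infDist x B) ≤ 0} := by
      ext x
      simp only [Set.mem_setOf_eq, sub_nonpos]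
      constructor
      · rintro ⟨hx, hle⟩
        calc Metric.infDist x A
            ≤ a * min 1 (Metric.infDist x B) := by
              rw [← div_le_iff₀ (hden x hx)] at *; exact hle
          _ = _ := rfl
      · intro h
        have hxB : x ∈ Bᶜ := by
          intro hxB
          have h0 : min 1 (Metric.infDist x B) = 0 := by
            have : Metric.infDist x B = 0 := Metric.infDist_zero_of_mem hxB
            simp [this]
          rw [h0, mul_zero] at h
          have hxA : x ∈ A := by
            exact (hAcl.mem_iff_infDist_zero hAne).2
              (le_antisymm h Metric.infDist_nonneg)
          exact absurd (Set.mem_inter hxA hxB) (by simp [hdisj])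
        exact ⟨hxB, (div_le_iff₀ (hden x hxB)).2 h⟩
    rw [hEq]
    exact isClosed_le (((Metric.continuous_infDist_pt A).sub (continuous_const.mul (continuous_const.min (Metric.continuous_infDist_pt B))))) continuous_const
end

section
/- Let A be a closed subset and U an open subset of a metric space X with A ⊆ U. Then there exists a 𝒦₀^∞ function ζ of A on U such that ζ(x) ≥ dist(x, A) for every x ∈ U. -/
open Metric

/-- **Lemma 3.6.** Let `A` be closed and `U` open in a metric space `X`
with `A ⊆ U`.  Then there is a `𝒦₀^∞` function `ζ` of `A` on `U` (continuous and
nonnegative on `U`, vanishing exactly on `A`, all sublevel sets closed in `X`) such that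
`ζ(x) ≥ dist(x, A)` for every `x ∈ U`. -/
theorem exists_K0_infty_ge_dist {X : Type*} [MetricSpace X] (A U : Set X)
    (hAcl : IsClosed A) (hUop : IsOpen U) (hAU : A ⊆ U) :
    ∃ ζ : X → ℝ,
      ContinuousOn ζ U ∧
      (∀ x ∈ U, 0 ≤ ζ x) ∧
      (∀ x ∈ U, (ζ x = 0 ↔ x ∈ A)) ∧
      (∀ a : ℝ, 0 ≤ a → IsClosed {x : X | x ∈ U ∧ ζ x ≤ a}) ∧
      (∀ x ∈ U, Metric.infDist x A ≤ ζ x) := by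
  by_cases hUc : Uᶜ = ∅
  · have hU : U = Set.univ := by
      rw [← Set.compl_empty, ← hUc, compl_compl]
    by_cases hA : A = ∅
    · refine ⟨fun _ => 1, continuousOn_const, fun x _ => one_pos.le,
        fun x _ => ?_, fun a ha => ?_, fun x _ => ?_⟩
      · simp [hA]
      · by_cases h1 : (1 : ℝ) ≤ a
        · have : {x : X | x ∈ U ∧ (1:ℝ) ≤ a} = Set.univ := by
            ext x; simp [hU, h1]
          rw [this]; exact isClosed_univ
        · have : {x : X | x ∈ U ∧ (1:ℝ) ≤ a} = ∅ := by
            ext x; simp [h1]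
          rw [this]; exact isClosed_empty
      · simp [hA, infDist_empty]
    · have hAne : A.Nonempty := Set.nonempty_iff_ne_empty.mpr hA
      refine ⟨fun x => infDist x A, (continuous_infDist_pt A).continuousOn,
        fun x _ => infDist_nonneg, fun x _ => ?_, fun a ha => ?_, fun x _ => le_refl _⟩
      · exact ⟨fun h => (hAcl.mem_iff_infDist_zero hAne).mpr h,
          fun h => (hAcl.mem_iff_infDist_zero hAne).mp h⟩
      · have : {x : X | x ∈ U ∧ infDist x A ≤ a} = (fun x => infDist x A) ⁻¹' Set.Iic a := by
          ext x; simp [hU]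
        rw [this]
        exact isClosed_Iic.preimage (continuous_infDist_pt A)
  · have hUcne : Uᶜ.Nonempty := Set.nonempty_iff_ne_empty.mpr hUc
    have hUccl : IsClosed Uᶜ := hUop.isClosed_compl
    have hdpos : ∀ x ∈ U, 0 < infDist x Uᶜ := fun x hx =>
      (hUccl.notMem_iff_infDist_pos hUcne).mp (by simp [hx])
    by_cases hA : A = ∅
    · refine ⟨fun x => 1 / infDist x Uᶜ, ?_, fun x hx => ?_, fun x hx => ?_,
        fun a ha => ?_, fun x hx => ?_⟩
      · exact ContinuousOn.div continuousOn_const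
          (continuous_infDist_pt Uᶜ).continuousOn (fun x hx => (hdpos x hx).ne')
      · have hd := hdpos x hx
        positivity
      · have hd := hdpos x hx
        constructor
        · intro h
          exact absurd h (by positivity)
        · intro h; simp [hA] at h
      · have : {x : X | x ∈ U ∧ 1 / infDist x Uᶜ ≤ a}
            = {x : X | 1 ≤ a * infDist x Uᶜ} := by
          ext x
          simp only [Set.mem_setOf_eq]
          constructor
          · rintro ⟨hxU, hle⟩
            have hd := hdpos x hxU
            rw [div_le_iff₀ hd] at hle
            linarith [mul_comm a (infDist x Uᶜ)]
          · intro h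
            have hxU : x ∈ U := by
              by_contra hxU
              have : infDist x Uᶜ = 0 := infDist_zero_of_mem (by simpa using hxU)
              rw [this] at h; linarith
            have hd := hdpos x hxU
            refine ⟨hxU, ?_⟩
            rw [div_le_iff₀ hd]
            linarith [mul_comm a (infDist x Uᶜ)]
        rw [this]
        have : Continuous fun x : X => a * infDist x Uᶜ :=
          continuous_const.mul (continuous_infDist_pt Uᶜ)
        exact isClosed_le continuous_const this
      · have := hdpos x hx
        simp [hA, infDist_empty]
        positivity
    · have hAne : A.Nonempty := Set.nonempty_iff_ne_empty.mpr hA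
      refine ⟨fun x => infDist x A + infDist x A / infDist x Uᶜ, ?_, fun x hx => ?_,
        fun x hx => ?_, fun a ha => ?_, fun x hx => ?_⟩
      · exact (continuous_infDist_pt A).continuousOn.add
          (ContinuousOn.div (continuous_infDist_pt A).continuousOn
            (continuous_infDist_pt Uᶜ).continuousOn (fun x hx => (hdpos x hx).ne'))
      · have := hdpos x hx
        have := @infDist_nonneg X _ A x
        positivity
      · have hd := hdpos x hx
        constructor
        · intro h
          have h1 : infDist x A = 0 := by
            have h2 : 0 ≤ infDist x A / infDist x Uᶜ :=
              div_nonneg infDist_nonneg hd.le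
            have := @infDist_nonneg X _ A x
            linarith
          exact (hAcl.mem_iff_infDist_zero hAne).mpr h1
        · intro h
          show infDist x A + infDist x A / infDist x Uᶜ = 0
          rw [infDist_zero_of_mem h]
          simp
      · have : {x : X | x ∈ U ∧ infDist x A + infDist x A / infDist x Uᶜ ≤ a}
            = {x : X | infDist x A * (infDist x Uᶜ + 1) ≤ a * infDist x Uᶜ} := by
          ext x
          simp only [Set.mem_setOf_eq]
          constructor
          · rintro ⟨hxU, hle⟩
            have hd := hdpos x hxU
            have hcanc : infDist x A / infDist x Uᶜ * infDist x Uᶜ = infDist x A :=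
              div_mul_cancel₀ _ hd.ne'
            nlinarith [hd]
          · intro h
            have hxU : x ∈ U := by
              by_contra hxU
              have hd0 : infDist x Uᶜ = 0 := infDist_zero_of_mem (by simpa using hxU)
              rw [hd0] at h
              have hA0 : infDist x A = 0 := by
                have := @infDist_nonneg X _ A x; nlinarith
              exact hxU (hAU ((hAcl.mem_iff_infDist_zero hAne).mpr hA0))
            have hd := hdpos x hxU
            have hcanc : infDist x A / infDist x Uᶜ * infDist x Uᶜ = infDist x A :=
              div_mul_cancel₀ _ hd.ne'
            refine ⟨hxU, ?_⟩
            nlinarith [hd]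
        rw [this]
        exact isClosed_le
          ((continuous_infDist_pt A).mul ((continuous_infDist_pt Uᶜ).add continuous_const))
          (continuous_const.mul (continuous_infDist_pt Uᶜ))
      · have hd := hdpos x hx
        have : 0 ≤ infDist x A / infDist x Uᶜ := div_nonneg infDist_nonneg hd.le
        linarith
end

section
/- Let X be a topological space and A, B, Y closed subsets of X with Y ⊆ A. Then the relative category is subadditive: cat_{X,Y}(A ∪ B) ≤ cat_{X,Y}(A) + cat_X(B), where cat_X(B) = cat_{X,∅}(B). -/
open scoped unitInterval

/-- `A ≺_Y B` in `X`: there is a deformation `h : [0,1] × A → X` with `h(0,x) = x`,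
`h(1,x) ∈ B`, keeping `Y` inside `Y` throughout. -/
def Precat (X : Type*) [TopologicalSpace X] (Y A B : Set X) : Prop :=
  Y ⊆ A ∩ B ∧ ∃ h : ℝ → X → X,
    ContinuousOn (fun p : ℝ × X => h p.1 p.2) (Set.Icc (0 : ℝ) 1 ×ˢ A) ∧
    (∀ x ∈ A, h 0 x = x) ∧ (∀ x ∈ A, h 1 x ∈ B) ∧
    (∀ s ∈ Set.Icc (0 : ℝ) 1, ∀ y ∈ Y, h s y ∈ Y)

/-- `A` is contractible in `X`. -/
def ContractibleIn (X : Type*) [TopologicalSpace X] (A : Set X) : Prop :=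
  ∃ h : ℝ → X → X,
    ContinuousOn (fun p : ℝ × X => h p.1 p.2) (Set.Icc (0 : ℝ) 1 ×ˢ A) ∧
    (∀ x ∈ A, h 0 x = x) ∧ ∀ x ∈ A, ∀ y ∈ A, h 1 x = h 1 y

/-- Relative category `cat_{X,Y}(A)`: the least `n` such that `A = A₀ ∪ ⋯ ∪ Aₙ` with
the `A_j` closed in `X`, `A₁, …, Aₙ` contractible in `X`, and `A₀ ≺_Y Y` in `X`;
`∞` (i.e. `⊤`) if no such `n` exists. -/
noncomputable def relCat (X : Type*) [TopologicalSpace X] (Y A : Set X) : ℕ∞ :=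
  sInf {c : ℕ∞ | ∃ n : ℕ, (n : ℕ∞) = c ∧ ∃ As : Fin (n + 1) → Set X,
    (∀ j, IsClosed (As j)) ∧ A = ⋃ j, As j ∧
    (∀ j, j ≠ 0 → ContractibleIn X (As j)) ∧ Precat X Y (As 0) Y}

/-- Subadditivity of relative category:
`cat_{X,Y}(A ∪ B) ≤ cat_{X,Y}(A) + cat_X(B)` where `cat_X(B) = cat_{X,∅}(B)`. -/
theorem relCat_union_le {X : Type*} [TopologicalSpace X] (A B Y : Set X)
    (hA : IsClosed A) (hB : IsClosed B) (hY : IsClosed Y) (hYA : Y ⊆ A) :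
    relCat X Y (A ∪ B) ≤ relCat X Y A + relCat X ∅ B := by
  rcases eq_or_ne (relCat X Y A) ⊤ with h | ha
  · simp [h]
  rcases eq_or_ne (relCat X ∅ B) ⊤ with h | hb
  · simp [h]
  -- extract a cover for A of size ≤ relCat X Y A
  have hltA : relCat X Y A < relCat X Y A + 1 := by
    exact (ENat.lt_add_one_iff ha).mpr le_rfl
  have hltB : relCat X ∅ B < relCat X ∅ B + 1 := (ENat.lt_add_one_iff hb).mpr le_rfl
  rw [relCat, sInf_lt_iff] at hltA hltB
  obtain ⟨ca, hcaS, hcalt⟩ := hltA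
  obtain ⟨cb, hcbS, hcblt⟩ := hltB
  obtain ⟨n, rfl, As, hAsC, hAeq, hAsCon, hAsP⟩ := hcaS
  obtain ⟨m, rfl, Bs, hBsC, hBeq, hBsCon, hBsP⟩ := hcbS
  have hca : (n : ℕ∞) ≤ relCat X Y A := (ENat.lt_add_one_iff ha).mp hcalt
  have hcb : (m : ℕ∞) ≤ relCat X ∅ B := (ENat.lt_add_one_iff hb).mp hcblt
  -- Bs 0 is empty
  have hB0 : Bs 0 = ∅ := by
    obtain ⟨_, h, _, _, hmap, _⟩ := hBsP
    ext x
    simp only [Set.mem_empty_iff_false, iff_false]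
    intro hx
    exact (hmap x hx)
  -- build the combined cover
  set Cs : Fin (n + m + 1) → Set X := fun i =>
    if h : (i : ℕ) < n + 1 then As ⟨i, h⟩ else Bs ⟨(i : ℕ) - n, by omega⟩ with hCs
  have key : (((n + m : ℕ) : ℕ∞)) ∈ {c : ℕ∞ | ∃ k : ℕ, (k : ℕ∞) = c ∧
      ∃ Ds : Fin (k + 1) → Set X, (∀ j, IsClosed (Ds j)) ∧ (A ∪ B) = ⋃ j, Ds j ∧
      (∀ j, j ≠ 0 → ContractibleIn X (Ds j)) ∧ Precat X Y (Ds 0) Y} := by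
    refine ⟨n + m, rfl, Cs, ?_, ?_, ?_, ?_⟩
    · intro j
      rw [hCs]
      dsimp only
      split <;> apply_rules
    · ext x
      simp only [Set.mem_union, Set.mem_iUnion]
      constructor
      · rintro (hx | hx)
        · rw [hAeq] at hx
          obtain ⟨j, hj⟩ := Set.mem_iUnion.mp hx
          refine ⟨⟨(j : ℕ), by omega⟩, ?_⟩
          rw [hCs]
          dsimp only
          rw [dif_pos (by exact j.isLt)]
          simpa using hj
        · rw [hBeq] at hx
          obtain ⟨j, hj⟩ := Set.mem_iUnion.mp hx
          have hj0 : (j : ℕ) ≠ 0 := by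
            rintro h0
            rw [show j = 0 from Fin.ext h0, hB0] at hj
            exact hj
          refine ⟨⟨n + 1 + ((j : ℕ) - 1), by omega⟩, ?_⟩
          rw [hCs]
          dsimp only
          rw [dif_neg (by omega)]
          have : n + 1 + ((j : ℕ) - 1) - n = (j : ℕ) := by omega
          simp only [this]
          simpa using hj
      · rintro ⟨i, hi⟩
        rw [hCs] at hi
        dsimp only at hi
        split at hi
        · left; rw [hAeq]; exact Set.mem_iUnion.mpr ⟨_, hi⟩
        · right; rw [hBeq]; exact Set.mem_iUnion.mpr ⟨_, hi⟩
    · intro j hj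
      rw [hCs]
      dsimp only
      split
      · apply hAsCon
        simp only [ne_eq, Fin.ext_iff, Fin.val_zero]
        intro h0
        exact hj (Fin.ext h0)
      · apply hBsCon
        simp only [ne_eq, Fin.ext_iff, Fin.val_zero]
        omega
    · have : Cs 0 = As 0 := by
        rw [hCs]
        dsimp only
        rw [dif_pos (by simp)]
        congr 1
      rw [this]
      exact hAsP
  calc relCat X Y (A ∪ B) ≤ ((n + m : ℕ) : ℕ∞) := sInf_le key
    _ = (n : ℕ∞) + (m : ℕ∞) := by push_cast; ring
    _ ≤ relCat X Y A + relCat X ∅ B := add_le_add hca hcb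
end

section
/- Let X be a topological space and A, B, Y closed subsets of X with Y ⊆ A ∩ B. If A ≺_Y B in X, then cat_{X,Y}(A) ≤ cat_{X,Y}(B) (homotopy property of relative category). -/
open scoped unitInterval
open Set

private lemma cont_one {X : Type*} [TopologicalSpace X] (h : ℝ → X → X) (S : Set X)
    (hh : ContinuousOn (fun p : ℝ × X => h p.1 p.2) (Set.Icc (0:ℝ) 1 ×ˢ S)) :
    ContinuousOn (fun x : X => h 1 x) S := by
  have cmap : Continuous (fun x : X => (((1:ℝ), x) : ℝ × X)) := by fun_prop
  exact hh.comp cmap.continuousOn (fun x hx => ⟨⟨zero_le_one, le_refl 1⟩, hx⟩)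

private lemma cont_glue {X : Type*} [TopologicalSpace X]
    (h k : ℝ → X → X) (S T S' : Set X)
    (hh : ContinuousOn (fun p : ℝ × X => h p.1 p.2) (Set.Icc (0:ℝ) 1 ×ˢ S))
    (hk : ContinuousOn (fun p : ℝ × X => k p.1 p.2) (Set.Icc (0:ℝ) 1 ×ˢ T))
    (hS' : S' ⊆ S) (hmap : ∀ x ∈ S', h 1 x ∈ T)
    (hk0 : ∀ y ∈ T, k 0 y = y) :
    ContinuousOn (fun p : ℝ × X =>
      if p.1 ≤ 1/2 then h (min (2*p.1) 1) p.2 else k (max (2*p.1-1) 0) (h 1 p.2))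
      (Set.Icc (0:ℝ) 1 ×ˢ S') := by
  set s : Set (ℝ × X) := Set.Icc (0:ℝ) 1 ×ˢ S'
  have hc1 : ContinuousOn (fun p : ℝ × X => h (min (2*p.1) 1) p.2) s := by
    have cmap : Continuous (fun p : ℝ × X => ((min (2*p.1) 1, p.2) : ℝ × X)) := by
      fun_prop
    refine hh.comp cmap.continuousOn ?_
    rintro ⟨t, x⟩ ⟨ht, hx⟩
    exact ⟨⟨le_min (by linarith [ht.1]) one_pos.le, min_le_right _ _⟩, hS' hx⟩
  have hone : ContinuousOn (fun x : X => h 1 x) S' := (cont_one h S hh).mono hS'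
  have hc2 : ContinuousOn (fun p : ℝ × X => k (max (2*p.1-1) 0) (h 1 p.2)) s := by
    have cpair : ContinuousOn (fun p : ℝ × X => ((max (2*p.1-1) 0, h 1 p.2) : ℝ × X)) s := by
      refine ContinuousOn.prodMk (by fun_prop) ?_
      exact hone.comp continuous_snd.continuousOn (fun p hp => hp.2)
    refine hk.comp cpair ?_
    rintro ⟨t, x⟩ ⟨ht, hx⟩
    exact ⟨⟨le_max_right _ _, max_le (by linarith [ht.2]) zero_le_one⟩, hmap x hx⟩
  refine ContinuousOn.if ?_ (hc1.mono inter_subset_left) (hc2.mono inter_subset_left)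
  rintro ⟨t, x⟩ ⟨hp, hfr⟩
  have ht : t = 1/2 := by
    have := frontier_le_subset_eq (f := fun p : ℝ × X => p.1)
      (g := fun _ => (1:ℝ)/2) continuous_fst continuous_const hfr
    simpa using this
  subst ht
  have h1 : min (2*(1/2:ℝ)) 1 = 1 := by norm_num
  have h2 : max (2*(1/2:ℝ)-1) 0 = 0 := by norm_num
  rw [h1, h2, hk0 _ (hmap x hp.2)]

/-- Homotopy property of relative category: if `A ≺_Y B` in `X`
then `cat_{X,Y}(A) ≤ cat_{X,Y}(B)`. -/
theorem relCat_le_of_precat {X : Type*} [TopologicalSpace X] (A B Y : Set X)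
    (hA : IsClosed A) (hB : IsClosed B) (hY : IsClosed Y)
    (hYAB : Y ⊆ A ∩ B) (hAB : Precat X Y A B) :
    relCat X Y A ≤ relCat X Y B := by
  obtain ⟨-, h, hhc, hh0, hh1, hhY⟩ := hAB
  have h1cont : ContinuousOn (fun x : X => h 1 x) A := cont_one h A hhc
  refine sInf_le_sInf ?_
  rintro c ⟨n, rfl, Bs, hBcl, hBcov, hBcontr, hYB0, k0, hk0c, hk00, hk01, hk0Y⟩
  set As : Fin (n + 1) → Set X := fun j => A ∩ (fun x => h 1 x) ⁻¹' (Bs j) with hAs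
  have hAsub : ∀ j, As j ⊆ A := fun j => inter_subset_left
  have hAmap : ∀ j, ∀ x ∈ As j, h 1 x ∈ Bs j := fun j x hx => hx.2
  refine ⟨n, rfl, As, ?_, ?_, ?_, ?_⟩
  · exact fun j => h1cont.preimage_isClosed_of_isClosed hA (hBcl j)
  · apply Subset.antisymm
    · intro x hx
      have : h 1 x ∈ ⋃ j, Bs j := hBcov ▸ hh1 x hx
      obtain ⟨j, hj⟩ := mem_iUnion.mp this
      exact mem_iUnion.mpr ⟨j, hx, hj⟩
    · exact iUnion_subset fun j => hAsub j
  · intro j hj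
    obtain ⟨k, hkc, hk0, hk1⟩ := hBcontr j hj
    refine ⟨fun s x => if s ≤ 1/2 then h (min (2*s) 1) x else k (max (2*s-1) 0) (h 1 x),
      cont_glue h k A (Bs j) (As j) hhc hkc (hAsub j) (hAmap j) hk0, ?_, ?_⟩
    · intro x hx
      simp only [if_pos (by norm_num : (0:ℝ) ≤ 1/2)]
      rw [show min (2*(0:ℝ)) 1 = 0 by norm_num, hh0 x (hAsub j hx)]
    · intro x hx y hy
      simp only [if_neg (by norm_num : ¬ (1:ℝ) ≤ 1/2)]
      rw [show max (2*(1:ℝ)-1) 0 = 1 by norm_num]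
      exact hk1 _ (hAmap j x hx) _ (hAmap j y hy)
  · have hYsub : Y ⊆ Bs 0 := fun y hy => (hYB0 hy).1
    refine ⟨fun y hy => ⟨⟨(hYAB hy).1, hYsub ((hhY 1 ⟨zero_le_one, le_refl 1⟩ y hy))⟩, hy⟩,
      fun s x => if s ≤ 1/2 then h (min (2*s) 1) x else k0 (max (2*s-1) 0) (h 1 x),
      cont_glue h k0 A (Bs 0) (As 0) hhc hk0c (hAsub 0) (hAmap 0) hk00, ?_, ?_, ?_⟩
    · intro x hx
      simp only [if_pos (by norm_num : (0:ℝ) ≤ 1/2)]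
      rw [show min (2*(0:ℝ)) 1 = 0 by norm_num, hh0 x (hAsub 0 hx)]
    · intro x hx
      simp only [if_neg (by norm_num : ¬ (1:ℝ) ≤ 1/2)]
      rw [show max (2*(1:ℝ)-1) 0 = 1 by norm_num]
      exact hk01 _ (hAmap 0 x hx)
    · intro s hs y hy
      by_cases hcase : s ≤ 1/2
      · simp only [if_pos hcase]
        exact hhY _ ⟨le_min (by linarith [hs.1]) zero_le_one, min_le_right _ _⟩ y hy
      · simp only [if_neg hcase]
        exact hk0Y _ ⟨le_max_right _ _, max_le (by linarith [hs.2]) zero_le_one⟩ _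
          (hhY 1 ⟨zero_le_one, le_refl 1⟩ y hy)
end
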